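/- If φ is a fuzzy simulation between fuzzy automata A and A', then for every x ∈ A and x' ∈ A': φ(x,x') ≤ S(L(A,x), L(A',x')), i.e., the degree φ(x,x') is at most the degree to which the fuzzy language recognized from state x in A is included in the fuzzy language recognized from state x' in A'. -/

import Mathlib

/-- A complete residuated lattice: a complete lattice with a commutative monoid
structure whose unit is the top element, together with a residuum `himp`
satisfying the adjointness property. -/
class CompleteResiduatedLattice (L : Type*) extends CompleteLattice L, CommMonoid L where
  himp : L → L → L
  adjoint : ∀ a b c : L, a * b ≤ c ↔ a ≤ himp b c
  one_eq_top : (1 : L) = ⊤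

open CompleteResiduatedLattice

variable {L : Type*} [CompleteResiduatedLattice L]

/-- Sup-⊗ composition of fuzzy relations. -/
def relComp {X Y Z : Type*} (φ : X → Y → L) (ψ : Y → Z → L) : X → Z → L :=
  fun x z => ⨆ y, φ x y * ψ y z

/-- Composition of a fuzzy relation with a fuzzy set. -/
def relSet {X Y : Type*} (φ : X → Y → L) (g : Y → L) : X → L :=
  fun x => ⨆ y, φ x y * g y

/-- Composition of a fuzzy set with a fuzzy relation. -/
def setRel {X Y : Type*} (f : X → L) (φ : X → Y → L) : Y → L :=
  fun y => ⨆ x, f x * φ x y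

/-- The converse of a fuzzy relation. -/
def conv {X Y : Type*} (φ : X → Y → L) : Y → X → L := fun y x => φ x y

/-- The fuzzy degree of inclusion of fuzzy sets. -/
def fuzS {X : Type*} (f g : X → L) : L := ⨅ x, himp (f x) (g x)

/-- The fuzzy degree of equality of fuzzy sets. -/
def fuzE {X : Type*} (f g : X → L) : L := ⨅ x, himp (f x) (g x) ⊓ himp (g x) (f x)

/-- A fuzzy automaton over the alphabet `Sig` with state set `A`. -/
structure FuzzyAutomaton (L : Type*) (Sig : Type*) (A : Type*) where
  δ : A → Sig → A → L
  σ : A → L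
  τ : A → L

variable {Sig : Type*}

/-- A fuzzy simulation between two fuzzy automata. -/
def IsFuzzySimulation {A A' : Type*} (M : FuzzyAutomaton L Sig A)
    (M' : FuzzyAutomaton L Sig A') (φ : A → A' → L) : Prop :=
  (∀ s, relComp (conv φ) (fun x y => M.δ x s y) ≤
        relComp (fun x' y' => M'.δ x' s y') (conv φ)) ∧
  relSet (conv φ) M.τ ≤ M'.τ

/-- The norm of a fuzzy simulation: `S(σ^A, σ^{A'} ∘ φ⁻¹)`. -/
def simNorm {A A' : Type*} (M : FuzzyAutomaton L Sig A)
    (M' : FuzzyAutomaton L Sig A') (φ : A → A' → L) : L :=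
  fuzS M.σ (setRel M'.σ (conv φ))

/-- A fuzzy bisimulation between two fuzzy automata. -/
def IsFuzzyBisimulation {A A' : Type*} (M : FuzzyAutomaton L Sig A)
    (M' : FuzzyAutomaton L Sig A') (φ : A → A' → L) : Prop :=
  IsFuzzySimulation M M' φ ∧ IsFuzzySimulation M' M (conv φ)

/-- The norm of a fuzzy bisimulation. -/
def bisimNorm {A A' : Type*} (M : FuzzyAutomaton L Sig A)
    (M' : FuzzyAutomaton L Sig A') (φ : A → A' → L) : L :=
  simNorm M M' φ ⊓ simNorm M' M (conv φ)

/-- The fuzzy language recognized from a given state: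
`L(A,x)(s₁…sₙ) = (δ_{s₁} ∘ … ∘ δ_{sₙ} ∘ τ)(x)`. -/
def langFrom {A : Type*} (M : FuzzyAutomaton L Sig A) : A → List Sig → L
  | x, [] => M.τ x
  | x, s :: w => ⨆ y, M.δ x s y * langFrom M y w

/-- The fuzzy language recognized by a fuzzy automaton. -/
def lang {A : Type*} (M : FuzzyAutomaton L Sig A) (w : List Sig) : L :=
  ⨆ x, M.σ x * langFrom M x w

/- A simulation lets `φ⁻¹` be pushed past every transition, `φ⁻¹ ∘ δ_s ≤ δ'_s ∘ φ⁻¹`, and finally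
past the terminal set, `φ⁻¹ ∘ τ ≤ τ'`. Since `L(A,·)(s₁…sₙ) = δ_{s₁} ∘ … ∘ δ_{sₙ} ∘ τ`, induction on
the word gives `φ⁻¹ ∘ L(A,·)(w) ≤ L(A',·)(w)`, i.e. `φ x x' ⊗ L(A,x)(w) ≤ L(A',x')(w)` for every
`w`, which is the claim by adjointness. -/

namespace CompleteResiduatedLattice

theorem gc_mul_himp (b : L) : GaloisConnection (· * b) (himp b) :=
  fun a c => adjoint a b c

instance : IsQuantale L where
  mul_sSup_distrib x s := by
    simp only [mul_comm x]
    exact (gc_mul_himp x).l_sSup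
  sSup_mul_distrib s x := (gc_mul_himp x).l_sSup

theorem le_fuzS_iff {X : Type*} {c : L} {f g : X → L} : c ≤ fuzS f g ↔ ∀ w, c * f w ≤ g w := by
  simp only [fuzS, le_iInf_iff, adjoint]

end CompleteResiduatedLattice

section Composition

variable {X Y Z : Type*}

theorem relSet_relComp (φ : X → Y → L) (ψ : Y → Z → L) (g : Z → L) :
    relSet (relComp φ ψ) g = relSet φ (relSet ψ g) := by
  funext x
  simp only [relSet, relComp, Quantale.iSup_mul_distrib, Quantale.mul_iSup_distrib, mul_assoc]
  exact iSup_comm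

theorem relSet_mono_left {φ ψ : X → Y → L} (h : φ ≤ ψ) (g : Y → L) :
    relSet φ g ≤ relSet ψ g :=
  fun x => iSup_mono fun y => mul_le_mul_left (h x y) _

theorem relSet_mono_right (φ : X → Y → L) {f g : Y → L} (h : f ≤ g) :
    relSet φ f ≤ relSet φ g :=
  fun _ => iSup_mono fun y => mul_le_mul_right (h y) _

theorem le_relSet (φ : X → Y → L) (g : Y → L) (x : X) (y : Y) : φ x y * g y ≤ relSet φ g x :=
  le_iSup (fun y => φ x y * g y) y

end Composition

theorem langFrom_cons {A : Type*} (M : FuzzyAutomaton L Sig A) (s : Sig) (w : List Sig) :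
    (langFrom M · (s :: w)) = relSet (fun x y => M.δ x s y) (langFrom M · w) :=
  rfl

theorem IsFuzzySimulation.relSet_langFrom_le {A A' : Type*} {M : FuzzyAutomaton L Sig A}
    {M' : FuzzyAutomaton L Sig A'} {φ : A → A' → L} (hφ : IsFuzzySimulation M M' φ) :
    ∀ w, relSet (conv φ) (langFrom M · w) ≤ (langFrom M' · w)
  | [] => hφ.2
  | s :: w =>
    calc relSet (conv φ) (langFrom M · (s :: w))
        = relSet (relComp (conv φ) fun x y => M.δ x s y) (langFrom M · w) := by
          rw [langFrom_cons, relSet_relComp]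
      _ ≤ relSet (relComp (fun x' y' => M'.δ x' s y') (conv φ)) (langFrom M · w) :=
          relSet_mono_left (hφ.1 s) _
      _ = relSet (fun x' y' => M'.δ x' s y') (relSet (conv φ) (langFrom M · w)) :=
          relSet_relComp _ _ _
      _ ≤ (langFrom M' · (s :: w)) :=
          relSet_mono_right _ (hφ.relSet_langFrom_le w)

theorem stmt13_general {A A' : Type*}
    (M : FuzzyAutomaton L Sig A) (M' : FuzzyAutomaton L Sig A')
    (φ : A → A' → L) (hφ : IsFuzzySimulation M M' φ) (x : A) (x' : A') :
    φ x x' ≤ fuzS (langFrom M x) (langFrom M' x') :=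
  le_fuzS_iff.2 fun w => (le_relSet (conv φ) _ x' x).trans (hφ.relSet_langFrom_le w x')

theorem stmt13 {A A' : Type*} [Nonempty A] [Nonempty A']
    (M : FuzzyAutomaton L Sig A) (M' : FuzzyAutomaton L Sig A')
    (φ : A → A' → L) (hφ : IsFuzzySimulation M M' φ) (x : A) (x' : A') :
    φ x x' ≤ fuzS (langFrom M x) (langFrom M' x') :=
  stmt13_general M M' φ hφ x x'
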